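/- Let M be a real symmetric positive definite matrix with all diagonal entries equal to Z_II > 0. Then Tr(M⁻²) + Tr(M⁻¹)² + √(π·Tr(M⁻²))·Tr(M⁻¹) ≥ (N + N² + √(πN)·N)/Z_II², i.e., the channel-gain scaling law with mutual coupling is at least the scaling law without mutual coupling. -/

import Mathlib

/-!
Write `A = M⁻¹`. Cauchy–Schwarz for the inner product `⟪x, y⟫ = xᵀ A y`, applied to `eᵢ` and
`M eᵢ`, gives `1 ≤ Aᵢᵢ Mᵢᵢ`, so every diagonal entry of `A` is at least `1 / Z_II`. Hence
`Tr A ≥ N / Z_II` and, since `A` is symmetric, `Tr A² = ∑ᵢⱼ Aᵢⱼ² ≥ ∑ᵢ Aᵢᵢ² ≥ N / Z_II²`. The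
right-hand side is increasing in `Tr A²` and `Tr A`, and at `(N / Z_II², N / Z_II)` it equals the
left-hand side.
-/

open Matrix Real

theorem Matrix.PosDef.inv_le_inv_apply_self {n : Type*} [Fintype n] [DecidableEq n]
    {M : Matrix n n ℝ} (hM : M.PosDef) (i : n) : (M i i)⁻¹ ≤ M⁻¹ i i := by
  let := M⁻¹.toSeminormedAddCommGroup hM.inv.posSemidef
  let := M⁻¹.toInnerProductSpace hM.inv.posSemidef
  have inner_eq : ∀ x y : n → ℝ, inner ℝ x y = (M⁻¹ *ᵥ y) ⬝ᵥ x := fun _ _ => rfl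
  have cauchy_schwarz := real_inner_mul_inner_self_le (Pi.single i 1) (M *ᵥ Pi.single i 1)
  simp only [inner_eq, mulVec_mulVec, nonsing_inv_mul _ ((isUnit_iff_isUnit_det M).mp hM.isUnit),
    one_mulVec] at cauchy_schwarz
  simp only [dotProduct_single, Pi.single_eq_same, mul_one, mulVec_single, MulOpposite.op_one,
    one_smul, col_apply, single_dotProduct, one_mul] at cauchy_schwarz
  exact (inv_le_iff_one_le_mul₀ hM.diag_pos).mpr cauchy_schwarz

theorem Matrix.IsSymm.sum_diag_sq_le_trace_sq {n R : Type*} [Fintype n] [DecidableEq n]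
    [CommRing R] [LinearOrder R] [IsStrictOrderedRing R] {A : Matrix n n R} (hA : A.IsSymm) :
    ∑ i, A i i ^ 2 ≤ (A ^ 2).trace := by
  rw [sq, trace]
  simp only [diag, mul_apply]
  refine Finset.sum_le_sum fun i _ => ?_
  calc A i i ^ 2 ≤ ∑ j, A i j ^ 2 :=
        Finset.single_le_sum (fun j _ => sq_nonneg (A i j)) (Finset.mem_univ i)
    _ = ∑ j, A i j * A j i := Finset.sum_congr rfl fun j _ => by rw [sq, hA.apply i j]

theorem add_sq_add_sqrt_mul_mul_le {c s S t T : ℝ} (hc : 0 ≤ c) (ht : 0 ≤ t)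
    (hsS : s ≤ S) (htT : t ≤ T) :
    s + t ^ 2 + √(c * s) * t ≤ S + T ^ 2 + √(c * S) * T := by
  have hsqrt : √(c * s) ≤ √(c * S) := sqrt_le_sqrt (mul_le_mul_of_nonneg_left hsS hc)
  gcongr

theorem scaling_law_MC_ge_NoMC (N : ℕ) (ZII : ℝ) (hZII : 0 < ZII)
    (M : Matrix (Fin N) (Fin N) ℝ) (hM : M.PosDef) (hdiag : ∀ n, M n n = ZII) :
    ((N : ℝ) + (N : ℝ) ^ 2 + Real.sqrt (Real.pi * N) * N) / ZII ^ 2 ≤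
      (M⁻¹ ^ 2).trace + (M⁻¹).trace ^ 2 +
        Real.sqrt (Real.pi * (M⁻¹ ^ 2).trace) * (M⁻¹).trace := by
  have inv_le_diag : ∀ i, ZII⁻¹ ≤ M⁻¹ i i := fun i => hdiag i ▸ hM.inv_le_inv_apply_self i
  have trace_ge : (N : ℝ) / ZII ≤ (M⁻¹).trace := by
    calc (N : ℝ) / ZII = ∑ _i : Fin N, ZII⁻¹ := by simp [div_eq_mul_inv]
      _ ≤ (M⁻¹).trace := Finset.sum_le_sum fun i _ => inv_le_diag i
  have trace_sq_ge : (N : ℝ) / ZII ^ 2 ≤ (M⁻¹ ^ 2).trace := by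
    calc (N : ℝ) / ZII ^ 2 = ∑ _i : Fin N, ZII⁻¹ ^ 2 := by simp [div_eq_mul_inv]
      _ ≤ ∑ i, M⁻¹ i i ^ 2 := Finset.sum_le_sum fun i _ => by gcongr; exact inv_le_diag i
      _ ≤ (M⁻¹ ^ 2).trace :=
        IsSymm.sum_diag_sq_le_trace_sq <| isHermitian_iff_isSymm.mp hM.isHermitian.inv
  have lhs_eq : ((N : ℝ) + (N : ℝ) ^ 2 + √(π * N) * N) / ZII ^ 2 =
      N / ZII ^ 2 + (N / ZII) ^ 2 + √(π * (N / ZII ^ 2)) * (N / ZII) := by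
    rw [← mul_div_assoc π, sqrt_div' _ (sq_nonneg ZII), sqrt_sq hZII.le]
    field_simp
  rw [lhs_eq]
  exact add_sq_add_sqrt_mul_mul_le pi_nonneg (by positivity) trace_sq_ge trace_ge
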